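/- arXiv:2604.09795 — 2 statements merged into one kernel-verified Lean document; each statement's English description precedes it below -/
import Mathlib

section
/- Let μ₂ > 0 and let α₂ : ℝ → ℝ be a differentiable function satisfying α₂'(t) = μ₂ · cos(α₂(t)) for all t ≥ 0, with α₂(0) ∈ (-π/2, π/2). Then for all t ≥ 0, 1 - sin(α₂(t)) ≤ 2 · exp(-2(μ₂ t + artanh(sin(α₂(0))))); in particular sin(α₂(t)) converges to 1 exponentially fast, with higher gain μ₂ yielding faster convergence. -/
/-!
Along the flow, `g = sin ∘ α₂` solves the logistic-type equation `g' = μ₂ (1 - g²)`, so it is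
nondecreasing and `1 + g` stays positive. Then `(1 - g) / (1 + g)` satisfies `φ' = -2 μ₂ φ`,
hence decays like `exp (-2 μ₂ t)`, and its initial value is `exp (-2 artanh (g 0))`.
Finally `1 - g = (1 + g) φ ≤ 2 φ`.
-/

open Real Set

/-- The inverse hyperbolic tangent. -/
noncomputable def artanh (x : ℝ) : ℝ := (1 / 2) * Real.log ((1 + x) / (1 - x))

lemma hasDerivAt_sin_comp_of_hasDerivAt_mul_cos {α : ℝ → ℝ} {μ t : ℝ}
    (h : HasDerivAt α (μ * cos (α t)) t) :
    HasDerivAt (fun s => sin (α s)) (μ * (1 - sin (α t) ^ 2)) t := by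
  refine ((hasDerivAt_sin (α t)).comp t h).congr_deriv ?_
  rw [← cos_sq' (α t)]
  ring

lemma sin_mem_Ioo_of_mem_Ioo {x : ℝ} (hx : x ∈ Ioo (-(π / 2)) (π / 2)) :
    sin x ∈ Ioo (-1) 1 := by
  have hπ : 0 < π / 2 := by positivity
  constructor
  · simpa using sin_lt_sin_of_lt_of_le_pi_div_two le_rfl hx.2.le hx.1
  · simpa using sin_lt_sin_of_lt_of_le_pi_div_two (by linarith [hx.1]) le_rfl hx.2

lemma exp_neg_two_mul_artanh {x : ℝ} (hx : x ∈ Ioo (-1) 1) :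
    exp (-2 * _root_.artanh x) = (1 - x) / (1 + x) := by
  have hpos : 0 < (1 + x) / (1 - x) := div_pos (by linarith [hx.1]) (by linarith [hx.2])
  rw [_root_.artanh, show -2 * (1 / 2 * log ((1 + x) / (1 - x))) = -log ((1 + x) / (1 - x)) by
    ring, exp_neg, exp_log hpos, inv_div]

lemma eq_mul_exp_of_hasDerivAt_eq_mul {f : ℝ → ℝ} {c t : ℝ}
    (hf : ∀ s, 0 ≤ s → HasDerivAt f (c * f s) s) (ht : 0 ≤ t) :
    f t = f 0 * exp (c * t) := by
  set ψ : ℝ → ℝ := fun s => f s * exp (-(c * s))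
  have hψ : ∀ s, 0 ≤ s → HasDerivAt ψ 0 s := by
    intro s hs
    have he : HasDerivAt (fun s => exp (-(c * s))) (exp (-(c * s)) * -c) s := by
      simpa using ((hasDerivAt_id s).const_mul c).neg.exp
    exact ((hf s hs).mul he).congr_deriv (by ring)
  have hconst := constant_of_has_deriv_right_zero
    (HasDerivAt.continuousOn fun s hs => hψ s hs.1)
    (fun s hs => (hψ s hs.1).hasDerivWithinAt) t ⟨ht, le_rfl⟩
  simp only [ψ, mul_zero, neg_zero, exp_zero, mul_one] at hconst
  rw [← hconst, mul_assoc, ← exp_add, neg_add_cancel, exp_zero, mul_one]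

lemma hasDerivAt_one_sub_div_one_add {g : ℝ → ℝ} {μ t : ℝ}
    (hg : HasDerivAt g (μ * (1 - g t ^ 2)) t) (hne : 1 + g t ≠ 0) :
    HasDerivAt (fun s => (1 - g s) / (1 + g s)) (-2 * μ * ((1 - g t) / (1 + g t))) t := by
  refine ((hg.const_sub 1).div (hg.const_add 1) hne).congr_deriv ?_
  field_simp
  ring

lemma one_sub_le_two_mul_exp_of_hasDerivAt {g : ℝ → ℝ} {μ : ℝ} (hμ : 0 ≤ μ)
    (hg : ∀ t, 0 ≤ t → HasDerivAt g (μ * (1 - g t ^ 2)) t)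
    (hg_mem : ∀ t, 0 ≤ t → g t ∈ Icc (-1) 1) (h0 : g 0 ∈ Ioo (-1) 1) {t : ℝ} (ht : 0 ≤ t) :
    1 - g t ≤ 2 * exp (-2 * (μ * t + _root_.artanh (g 0))) := by
  have hmono : MonotoneOn g (Ici 0) :=
    monotoneOn_of_hasDerivWithinAt_nonneg (convex_Ici 0) (HasDerivAt.continuousOn hg)
      (fun s hs => (hg s (interior_subset hs)).hasDerivWithinAt)
      (fun s hs => by
        obtain ⟨hl, hu⟩ := hg_mem s (interior_subset hs)
        exact mul_nonneg hμ (by nlinarith))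
  have hpos : ∀ s, 0 ≤ s → 0 < 1 + g s := fun s hs => by
    linarith [h0.1, hmono self_mem_Ici (mem_Ici.mpr hs) hs]
  set φ : ℝ → ℝ := fun s => (1 - g s) / (1 + g s)
  have hφ : φ t = φ 0 * exp (-2 * μ * t) := eq_mul_exp_of_hasDerivAt_eq_mul
    (fun s hs => hasDerivAt_one_sub_div_one_add (hg s hs) (hpos s hs).ne') ht
  have hφ0 : φ 0 = exp (-2 * _root_.artanh (g 0)) := (exp_neg_two_mul_artanh h0).symm
  have hφt : 0 ≤ φ t := div_nonneg (by linarith [(hg_mem t ht).2]) (hpos t ht).le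
  calc 1 - g t = (1 + g t) * φ t := by simp only [φ]; field_simp [(hpos t ht).ne']
    _ ≤ 2 * φ t := mul_le_mul_of_nonneg_right (by linarith [(hg_mem t ht).2]) hφt
    _ = 2 * exp (-2 * (μ * t + _root_.artanh (g 0))) := by
      rw [hφ, hφ0, ← exp_add]
      ring_nf

theorem bearing_exponential_convergence_general
    (μ₂ : ℝ) (hμ₂ : 0 < μ₂) (α₂ : ℝ → ℝ)
    (hODE : ∀ t : ℝ, 0 ≤ t → HasDerivAt α₂ (μ₂ * Real.cos (α₂ t)) t)
    (h0 : α₂ 0 ∈ Set.Ioo (-(π / 2)) (π / 2)) :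
    ∀ t : ℝ, 0 ≤ t →
      1 - Real.sin (α₂ t) ≤
        2 * Real.exp (-2 * (μ₂ * t + _root_.artanh (Real.sin (α₂ 0)))) := fun _ ht =>
  one_sub_le_two_mul_exp_of_hasDerivAt (g := fun s => sin (α₂ s)) hμ₂.le
    (fun t ht => hasDerivAt_sin_comp_of_hasDerivAt_mul_cos (hODE t ht))
    (fun _ _ => ⟨neg_one_le_sin _, sin_le_one _⟩) (sin_mem_Ioo_of_mem_Ioo h0) ht

/-- Under the constant bearing steering control, `sin (α₂ t)` converges to `1`
exponentially fast, with rate proportional to the gain `μ₂`. -/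
theorem bearing_exponential_convergence
    (μ₂ : ℝ) (hμ₂ : 0 < μ₂) (α₂ : ℝ → ℝ)
    (hdiff : Differentiable ℝ α₂)
    (hODE : ∀ t : ℝ, 0 ≤ t → HasDerivAt α₂ (μ₂ * Real.cos (α₂ t)) t)
    (h0 : α₂ 0 ∈ Set.Ioo (-(π / 2)) (π / 2)) :
    ∀ t : ℝ, 0 ≤ t →
      1 - Real.sin (α₂ t) ≤
        2 * Real.exp (-2 * (μ₂ * t + _root_.artanh (Real.sin (α₂ 0)))) :=
  bearing_exponential_convergence_general μ₂ hμ₂ α₂ hODE h0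
end

section
/- Let v₁ > 0, μ₁ > 0, k_u ≥ 0, let g : (0,∞) → ℝ be C² with derivative f = g', let u₁ : [0,∞) → ℝ be continuous with |u₁(t)| ≤ k_u for all t, and let (ρ, α₁) be a solution of ρ' = -v₁ cos α₁, α₁' = -u₁(t) - μ₁ cos α₁ + v₁ f(ρ). Then V₁(t) = 1 + sin(α₁(t)) + g(ρ(t)) satisfies V₁'(t) ≤ -μ₁ cos²(α₁(t)) + k_u·|cos(α₁(t))| for all t ≥ 0; in particular, at every time t with |cos(α₁(t))| ≥ k_u/μ₁ one has V₁'(t) ≤ 0. -/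
open Real Set

/- The speed control is designed so that the coupling term `v₁ f(ρ)` in `α₁'` cancels, in
`d/dt V₁ = cos α₁ · α₁' + f(ρ) · ρ'`, against `f(ρ) · ρ' = -v₁ f(ρ) cos α₁`. What remains is
`-u₁ cos α₁ - μ₁ cos² α₁`, and `|u₁| ≤ k_u` bounds the perturbation term by `k_u |cos α₁|`,
which `μ₁ cos² α₁` dominates as soon as `|cos α₁| ≥ k_u / μ₁`. -/

theorem hasDerivAt_one_add_sin_add_comp {g f ρ α : ℝ → ℝ} {v μ w t : ℝ}
    (hg : HasDerivAt g (f (ρ t)) (ρ t))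
    (hρ : HasDerivAt ρ (-(v * cos (α t))) t)
    (hα : HasDerivAt α (w - μ * cos (α t) + v * f (ρ t)) t) :
    HasDerivAt (fun s => 1 + sin (α s) + g (ρ s)) (w * cos (α t) - μ * cos (α t) ^ 2) t := by
  have hsin := (hasDerivAt_sin (α t)).comp t hα
  have hgρ := hg.comp t hρ
  refine (((hasDerivAt_const t (1 : ℝ)).add hsin).add hgρ).congr_deriv ?_
  ring

theorem neg_mul_le_mul_abs_of_abs_le {R : Type*} [Ring R] [LinearOrder R] [IsOrderedRing R]
    {u k c : R} (h : |u| ≤ k) : -u * c ≤ k * |c| :=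
  calc -u * c = -(u * c) := neg_mul u c
    _ ≤ |u * c| := neg_le_abs _
    _ = |u| * |c| := abs_mul u c
    _ ≤ k * |c| := mul_le_mul_of_nonneg_right h (abs_nonneg c)

theorem mul_abs_le_mul_sq_of_div_le {K : Type*} [Field K] [LinearOrder K] [IsStrictOrderedRing K]
    {k μ c : K} (hμ : 0 < μ) (h : k / μ ≤ |c|) : k * |c| ≤ μ * c ^ 2 :=
  calc k * |c| ≤ μ * |c| * |c| :=
        mul_le_mul_of_nonneg_right ((div_le_iff₀' hμ).mp h) (abs_nonneg c)
    _ = μ * c ^ 2 := by rw [mul_assoc, ← sq, sq_abs]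

theorem lyapunov_derivative_bound_perturbed_general
    (v₁ μ₁ k_u : ℝ) (hμ₁ : 0 < μ₁)
    (g f : ℝ → ℝ)
    (hf : ∀ x ∈ Set.Ioi (0 : ℝ), HasDerivAt g (f x) x)
    (u₁ : ℝ → ℝ)
    (hu₁bdd : ∀ t : ℝ, 0 ≤ t → |u₁ t| ≤ k_u)
    (ρ α₁ : ℝ → ℝ)
    (hρpos : ∀ t : ℝ, 0 ≤ t → ρ t ∈ Set.Ioi (0 : ℝ))
    (hρ' : ∀ t : ℝ, 0 ≤ t → HasDerivAt ρ (-(v₁ * Real.cos (α₁ t))) t)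
    (hα₁' : ∀ t : ℝ, 0 ≤ t →
      HasDerivAt α₁ (-(u₁ t) - μ₁ * Real.cos (α₁ t) + v₁ * f (ρ t)) t) :
    ∀ t : ℝ, 0 ≤ t →
      deriv (fun s => 1 + Real.sin (α₁ s) + g (ρ s)) t ≤
        -(μ₁ * Real.cos (α₁ t) ^ 2) + k_u * |Real.cos (α₁ t)| ∧
      (k_u / μ₁ ≤ |Real.cos (α₁ t)| →
        deriv (fun s => 1 + Real.sin (α₁ s) + g (ρ s)) t ≤ 0) := by
  intro t ht
  rw [(hasDerivAt_one_add_sin_add_comp (hf (ρ t) (hρpos t ht)) (hρ' t ht) (hα₁' t ht)).deriv]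
  have hperturbation := neg_mul_le_mul_abs_of_abs_le (c := cos (α₁ t)) (hu₁bdd t ht)
  exact ⟨by linarith, fun hc => by linarith [mul_abs_le_mul_sq_of_div_le hμ₁ hc]⟩

/-- With a bounded perturbation `|u₁| ≤ k_u`, the Lyapunov derivative satisfies
`V₁' ≤ -μ₁ cos² α₁ + k_u |cos α₁|`; in particular `V₁' ≤ 0` whenever
`|cos α₁| ≥ k_u / μ₁`. -/
theorem lyapunov_derivative_bound_perturbed
    (v₁ μ₁ k_u : ℝ) (hv₁ : 0 < v₁) (hμ₁ : 0 < μ₁) (hk_u : 0 ≤ k_u)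
    (g f : ℝ → ℝ)
    (hg : ContDiffOn ℝ 2 g (Set.Ioi 0))
    (hf : ∀ x ∈ Set.Ioi (0 : ℝ), HasDerivAt g (f x) x)
    (u₁ : ℝ → ℝ) (hu₁ : Continuous u₁)
    (hu₁bdd : ∀ t : ℝ, 0 ≤ t → |u₁ t| ≤ k_u)
    (ρ α₁ : ℝ → ℝ)
    (hρpos : ∀ t : ℝ, 0 ≤ t → ρ t ∈ Set.Ioi (0 : ℝ))
    (hρ' : ∀ t : ℝ, 0 ≤ t → HasDerivAt ρ (-(v₁ * Real.cos (α₁ t))) t)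
    (hα₁' : ∀ t : ℝ, 0 ≤ t →
      HasDerivAt α₁ (-(u₁ t) - μ₁ * Real.cos (α₁ t) + v₁ * f (ρ t)) t) :
    ∀ t : ℝ, 0 ≤ t →
      deriv (fun s => 1 + Real.sin (α₁ s) + g (ρ s)) t ≤
        -(μ₁ * Real.cos (α₁ t) ^ 2) + k_u * |Real.cos (α₁ t)| ∧
      (k_u / μ₁ ≤ |Real.cos (α₁ t)| →
        deriv (fun s => 1 + Real.sin (α₁ s) + g (ρ s)) t ≤ 0) :=
  lyapunov_derivative_bound_perturbed_general v₁ μ₁ k_u hμ₁ g f hf u₁ hu₁bdd ρ α₁ hρpos hρ' hα₁'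
end
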